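/- Under the assumptions of the previous computation, the eigenvalue ε = ∑_{μ,ν} J_{μν} m_μ m_ν of the Ising part H^Z on the configuration m, and the corresponding 'free magnon' eigenvalue δ = a·j·(N/4 − 1) + ∑_{μ : a_μ=1} J_{μμ}, satisfy ε − δ = ((1−a)/4)·N·j + α with α ≥ 0; in particular ε − δ ≥ ((1−a)/4)·N·j. -/

import Mathlib

/-!
Substituting `m = 1/2 - a` expands `ε` into `(1/4) ∑ J - (1/2) ∑ J (a_μ + a_ν) + ∑ J a_μ a_ν`.
Constant row sums (and, by symmetry, column sums) turn the first two terms into `N j / 4 - A j`,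
and since `a_μ² = a_μ` the diagonal of the last term is exactly the diagonal part of `δ`, leaving
the off-diagonal sum `α`, a sum of non-negative terms.
-/

open Finset

section
variable {ι : Type*} [Fintype ι] (J : Matrix ι ι ℝ)

lemma sum_sum_mul_sub_mul_sub (c : ℝ) (x : ι → ℝ) :
    ∑ μ, ∑ ν, J μ ν * (c - x μ) * (c - x ν) =
      c ^ 2 * ∑ μ, ∑ ν, J μ ν - c * ∑ μ, ∑ ν, J μ ν * x μ - c * ∑ μ, ∑ ν, J μ ν * x ν
        + ∑ μ, ∑ ν, J μ ν * x μ * x ν := by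
  simp only [mul_sum, ← sum_sub_distrib, ← sum_add_distrib]
  exact sum_congr rfl fun _ _ => sum_congr rfl fun _ _ => by ring

variable {J} {j : ℝ}

lemma sum_sum_mul_left_of_rowSum (hrow : ∀ μ, ∑ ν, J μ ν = j) (x : ι → ℝ) :
    ∑ μ, ∑ ν, J μ ν * x μ = j * ∑ μ, x μ := by
  simp only [← sum_mul, hrow, mul_sum]

lemma sum_sum_mul_right_of_rowSum (hsym : J.IsSymm) (hrow : ∀ μ, ∑ ν, J μ ν = j)
    (x : ι → ℝ) : ∑ μ, ∑ ν, J μ ν * x ν = j * ∑ ν, x ν := by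
  rw [sum_comm, ← sum_sum_mul_left_of_rowSum hrow]
  simp only [hsym.apply]

lemma sum_sum_mul_mul_eq_offDiag_add_diag [DecidableEq ι] (x : ι → ℝ) :
    ∑ μ, ∑ ν, J μ ν * x μ * x ν =
      (∑ μ, ∑ ν, if μ = ν then 0 else J μ ν * x μ * x ν) + ∑ μ, J μ μ * x μ * x μ := by
  rw [← sum_add_distrib]
  refine sum_congr rfl fun μ _ => ?_
  rw [← sum_ite_eq_of_mem univ μ (fun ν => J μ ν * x μ * x ν) (mem_univ μ), ← sum_add_distrib]
  exact sum_congr rfl fun ν _ => by split_ifs <;> simp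

lemma offDiag_sum_sum_nonneg [DecidableEq ι] (hoff : ∀ μ ν, μ ≠ ν → 0 ≤ J μ ν) {x : ι → ℝ}
    (hx : ∀ μ, 0 ≤ x μ) : 0 ≤ ∑ μ, ∑ ν, if μ = ν then 0 else J μ ν * x μ * x ν := by
  refine sum_nonneg fun μ _ => sum_nonneg fun ν _ => ?_
  split_ifs with h
  · exact le_rfl
  · exact mul_nonneg (mul_nonneg (hoff μ ν h) (hx μ)) (hx ν)

end

theorem ising_vs_free_magnon_general (N : ℕ) (J : Matrix (Fin N) (Fin N) ℝ)
    (hsym : J.IsSymm) (hoff : ∀ μ ν, μ ≠ ν → 0 ≤ J μ ν)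
    (j : ℝ) (hrow : ∀ μ, ∑ ν, J μ ν = j)
    (a : Fin N → ℝ) (ha01 : ∀ μ, a μ = 0 ∨ a μ = 1) (A : ℕ) (hA : ∑ μ, a μ = A) :
    let m : Fin N → ℝ := fun μ => 1 / 2 - a μ
    let α : ℝ := ∑ μ, ∑ ν, if μ = ν then 0 else J μ ν * a μ * a ν
    let ε : ℝ := ∑ μ, ∑ ν, J μ ν * m μ * m ν
    let δ : ℝ := A * j * (N / 4 - 1) + ∑ μ, a μ * J μ μ
    ε - δ = ((1 - A) / 4) * N * j + α ∧ 0 ≤ α ∧ ((1 - A) / 4) * N * j ≤ ε - δ := by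
  intro m α ε δ
  have ha_nonneg (μ : Fin N) : 0 ≤ a μ := by rcases ha01 μ with h | h <;> simp [h]
  have ha_idem (μ : Fin N) : J μ μ * a μ * a μ = a μ * J μ μ := by
    rcases ha01 μ with h | h <;> simp [h]
  have hJ_total : ∑ μ, ∑ ν, J μ ν = N * j := by simp [hrow]
  have hε : ε = N * j / 4 - A * j + (α + ∑ μ, a μ * J μ μ) := by
    simp only [ε, m, sum_sum_mul_sub_mul_sub, hJ_total, sum_sum_mul_left_of_rowSum hrow,
      sum_sum_mul_right_of_rowSum hsym hrow, sum_sum_mul_mul_eq_offDiag_add_diag, ha_idem, hA]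
    ring
  have hα : 0 ≤ α := offDiag_sum_sum_nonneg hoff ha_nonneg
  have hgap : ε - δ = ((1 - A) / 4) * N * j + α := by
    rw [hε]
    ring
  exact ⟨hgap, hα, by linarith⟩

/-- Comparison of the Ising eigenvalue ε with the free-magnon eigenvalue δ:
ε − δ = ((1−a)/4)Nj + α with α ≥ 0, hence ε − δ ≥ ((1−a)/4)Nj. -/
theorem ising_vs_free_magnon (N : ℕ) (hN : 0 < N) (J : Matrix (Fin N) (Fin N) ℝ)
    (hsym : J.IsSymm) (hoff : ∀ μ ν, μ ≠ ν → 0 ≤ J μ ν)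
    (j : ℝ) (hrow : ∀ μ, ∑ ν, J μ ν = j)
    (a : Fin N → ℝ) (ha01 : ∀ μ, a μ = 0 ∨ a μ = 1) (A : ℕ) (hA : ∑ μ, a μ = A) :
    let m : Fin N → ℝ := fun μ => 1 / 2 - a μ
    let α : ℝ := ∑ μ, ∑ ν, if μ = ν then 0 else J μ ν * a μ * a ν
    let ε : ℝ := ∑ μ, ∑ ν, J μ ν * m μ * m ν
    let δ : ℝ := A * j * (N / 4 - 1) + ∑ μ, a μ * J μ μ
    ε - δ = ((1 - A) / 4) * N * j + α ∧ 0 ≤ α ∧ ((1 - A) / 4) * N * j ≤ ε - δ :=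
  ising_vs_free_magnon_general N J hsym hoff j hrow a ha01 A hA
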